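/- arXiv:1403.7927 — 5 statements merged into one kernel-verified Lean document; each statement's English description precedes it below -/
import Mathlib

section
/- Let ν be a complex number such that 1 + ν is not a nonpositive integer, let w > 0 be a real number, and let k be a natural number. Then the limit as μ → 0 (μ ranging over nonzero complex numbers) of (1/μ)·( w^{-μ} Γ(1+ν-μ)/Γ(1+k-μ) − w^{μ} Γ(1+ν+μ)/Γ(1+k+μ) ) exists and equals (2 Γ(1+ν)/k!)·( ψ(k+1) − ψ(1+ν) − ln w ). -/
/-!
The expression is `(f μ - f (-μ)) / μ` for `f μ = w^{-μ} Γ(1+ν-μ)/Γ(1+k-μ)`, which is holomorphic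
at `0`, so it tends to `2 f'(0)`. Logarithmic differentiation gives
`f'(0) = f(0) (ψ(1+k) - ψ(1+ν) - ln w)` with `f(0) = Γ(1+ν)/k!`.
-/

open Filter Topology

/-- The digamma function ψ(s) = Γ′(s)/Γ(s). -/
noncomputable def digamma (s : ℂ) : ℂ := deriv Complex.Gamma s / Complex.Gamma s

theorem HasDerivAt.tendsto_symmetric_slope_zero {𝕜 E : Type*} [NontriviallyNormedField 𝕜]
    [NormedAddCommGroup E] [NormedSpace 𝕜 E] {f : 𝕜 → E} {f' : E} {x : 𝕜}
    (hf : HasDerivAt f f' x) :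
    Tendsto (fun t ↦ t⁻¹ • (f (x + t) - f (x - t))) (𝓝[≠] 0) (𝓝 ((2 : 𝕜) • f')) := by
  have hreflect : HasDerivAt (fun t ↦ f (x - t)) (-f') 0 := by
    simpa [Function.comp_def] using
      hf.scomp_of_eq (0 : 𝕜) ((hasDerivAt_id 0).const_sub x) (by simp)
  convert hf.tendsto_slope_zero.sub hreflect.tendsto_slope_zero using 2 with t
  · simp only [zero_add, sub_zero, ← smul_sub, sub_sub_sub_cancel_right]
  · rw [sub_neg_eq_add, two_smul]

theorem hasDerivAt_Gamma_sub {s : ℂ} (hs : ∀ m : ℕ, s ≠ -m) :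
    HasDerivAt (fun μ ↦ Complex.Gamma (s - μ)) (-(digamma s * Complex.Gamma s)) 0 := by
  have hGamma : HasDerivAt Complex.Gamma (digamma s * Complex.Gamma s) (s - 0) := by
    rw [sub_zero, digamma, div_mul_cancel₀ _ (Complex.Gamma_ne_zero hs)]
    exact (Complex.differentiableAt_Gamma s hs).hasDerivAt
  simpa [Function.comp_def] using hGamma.comp 0 ((hasDerivAt_id 0).const_sub s)

theorem hasDerivAt_cexp_mul_Gamma_sub_div_Gamma_sub {a b : ℂ}
    (ha : ∀ m : ℕ, a ≠ -m) (hb : ∀ m : ℕ, b ≠ -m) (L : ℂ) :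
    HasDerivAt (fun μ ↦ Complex.exp (-μ * L) * Complex.Gamma (a - μ) / Complex.Gamma (b - μ))
      (Complex.Gamma a / Complex.Gamma b * (digamma b - digamma a - L)) 0 := by
  have hexp : HasDerivAt (fun μ : ℂ ↦ Complex.exp (-μ * L)) (-L) 0 := by
    simpa using ((hasDerivAt_id (0 : ℂ)).neg.mul_const L).cexp
  have hb₀ : Complex.Gamma b ≠ 0 := Complex.Gamma_ne_zero hb
  refine ((hexp.fun_mul (hasDerivAt_Gamma_sub ha)).fun_div (hasDerivAt_Gamma_sub hb)
    (by simpa using hb₀)).congr_deriv ?_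
  simp only [neg_zero, zero_mul, Complex.exp_zero, sub_zero, one_mul]
  field_simp
  ring

theorem limit_Bk_mu_zero_general (ν : ℂ) (hν : ∀ n : ℕ, 1 + ν ≠ -(n : ℂ))
    (w : ℝ) (k : ℕ) :
    Tendsto
      (fun μ : ℂ => (1/μ) *
        (Complex.exp (-μ * Real.log w) * Complex.Gamma (1 + ν - μ) / Complex.Gamma (1 + k - μ)
          - Complex.exp (μ * Real.log w) * Complex.Gamma (1 + ν + μ) / Complex.Gamma (1 + k + μ)))
      (nhdsWithin 0 {0}ᶜ)
      (nhds ((2 * Complex.Gamma (1 + ν) / (k.factorial : ℂ)) *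
        (digamma (k + 1) - digamma (1 + ν) - Real.log w))) := by
  have hk : ∀ m : ℕ, (1 + k : ℂ) ≠ -m := fun m ↦ by
    rw [Ne, eq_neg_iff_add_eq_zero]; norm_cast; omega
  have hfactorial : Complex.Gamma (1 + k) = k.factorial := by
    rw [add_comm]; exact Complex.Gamma_nat_eq_factorial k
  have hsym := (hasDerivAt_cexp_mul_Gamma_sub_div_Gamma_sub hν hk
    (Real.log w)).tendsto_symmetric_slope_zero
  rw [hfactorial, smul_eq_mul, ← mul_assoc, ← mul_div_assoc] at hsym
  rw [add_comm (k : ℂ) 1]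
  refine hsym.congr fun μ ↦ ?_
  simp only [zero_add, zero_sub, neg_neg, sub_neg_eq_add, smul_eq_mul, one_div]

/-- For ν with 1+ν not a nonpositive integer, w > 0 and k ∈ ℕ,
lim_{μ→0, μ≠0} (1/μ)(w^{-μ} Γ(1+ν-μ)/Γ(1+k-μ) − w^{μ} Γ(1+ν+μ)/Γ(1+k+μ))
 = (2Γ(1+ν)/k!)(ψ(k+1) − ψ(1+ν) − ln w). -/
theorem limit_Bk_mu_zero (ν : ℂ) (hν : ∀ n : ℕ, 1 + ν ≠ -(n : ℂ))
    (w : ℝ) (hw : 0 < w) (k : ℕ) :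
    Tendsto
      (fun μ : ℂ => (1/μ) *
        (Complex.exp (-μ * Real.log w) * Complex.Gamma (1 + ν - μ) / Complex.Gamma (1 + k - μ)
          - Complex.exp (μ * Real.log w) * Complex.Gamma (1 + ν + μ) / Complex.Gamma (1 + k + μ)))
      (nhdsWithin 0 {0}ᶜ)
      (nhds ((2 * Complex.Gamma (1 + ν) / (k.factorial : ℂ)) *
        (digamma (k + 1) - digamma (1 + ν) - Real.log w))) :=
  limit_Bk_mu_zero_general ν hν w k
end

section
/- Let a, b, c, ω be complex numbers with Re b > 0 and Re(c + ω − b) > 0, let z > 0 be real, and set α = ln((z+1)/z) (a positive real number). Then ∫_0^1 u^{b-1} (1-u)^{c+ω-b-1} (1 + z u)^{-a} du = (1+z)^{-a} ∫_0^∞ t^{b-1} (t+α)^{-a} f(t) e^{-ω t} dt, where f(t) = ((e^t − 1)/t)^{b-1} · e^{(1+a-c) t} · ((e^t − e^{-α})/(t+α))^{-a}, and both integrals converge. (This is the change of variables u = 1 − e^{-t}.) -/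
/-!
Substitute `u = 1 - e^{-t}`, `du = e^{-t} dt`. Then `1 - u = e^{-t}`, `u = e^{-t} · t · (e^t - 1)/t`
and, since `e^{-α} = z/(z+1)`, `1 + z u = (1 + z) · e^{-t} · (t + α) · (e^t - e^{-α})/(t + α)`.
All factors are positive reals, so the complex powers split over these products, and the powers
of `e^{-t}` combine with the Jacobian into `e^{(1+a-c)t} e^{-ωt}`. The left integral converges
because the Beta integrand does and `(1 + z u)^{-a}` is continuous on `[0, 1]`.
-/

open MeasureTheory Set Complex

section OneSubExpNeg

lemma strictMono_one_sub_exp_neg : StrictMono fun t : ℝ => 1 - Real.exp (-t) :=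
  fun _ _ h => sub_lt_sub_left (Real.exp_lt_exp.2 (neg_lt_neg h)) 1

lemma image_one_sub_exp_neg_Ioi : (fun t : ℝ => 1 - Real.exp (-t)) '' Ioi 0 = Ioo 0 1 := by
  ext u
  constructor
  · rintro ⟨t, ht, rfl⟩
    have : Real.exp (-t) < 1 := Real.exp_lt_one_iff.2 (neg_neg_of_pos ht)
    exact ⟨by linarith, by linarith [Real.exp_pos (-t)]⟩
  · rintro ⟨hu0, hu1⟩
    refine ⟨-Real.log (1 - u), neg_pos.2 (Real.log_neg (by linarith) (by linarith)), ?_⟩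
    simp only [neg_neg, Real.exp_log (sub_pos.2 hu1)]
    ring

lemma hasDerivAt_one_sub_exp_neg (t : ℝ) :
    HasDerivAt (fun t : ℝ => 1 - Real.exp (-t)) (Real.exp (-t)) t := by
  simpa using ((Real.hasDerivAt_exp (-t)).comp t (hasDerivAt_neg t)).const_sub 1

variable {E : Type*} [NormedAddCommGroup E] [NormedSpace ℝ E]

lemma integrableOn_Ioo_zero_one_iff_comp_one_sub_exp_neg (F : ℝ → E) :
    IntegrableOn F (Ioo 0 1) ↔
      IntegrableOn (fun t => Real.exp (-t) • F (1 - Real.exp (-t))) (Ioi 0) := by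
  rw [← image_one_sub_exp_neg_Ioi, integrableOn_image_iff_integrableOn_abs_deriv_smul
    measurableSet_Ioi (fun t _ => (hasDerivAt_one_sub_exp_neg t).hasDerivWithinAt)
    strictMono_one_sub_exp_neg.injective.injOn]
  simp only [Real.abs_exp]

lemma integral_Ioo_zero_one_eq_comp_one_sub_exp_neg (F : ℝ → E) :
    ∫ u in Ioo 0 1, F u = ∫ t in Ioi 0, Real.exp (-t) • F (1 - Real.exp (-t)) := by
  rw [← image_one_sub_exp_neg_Ioi, integral_image_eq_integral_abs_deriv_smul
    measurableSet_Ioi (fun t _ => (hasDerivAt_one_sub_exp_neg t).hasDerivWithinAt)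
    strictMono_one_sub_exp_neg.injective.injOn]
  simp only [Real.abs_exp]

end OneSubExpNeg

lemma integrableOn_beta_mul_one_add_mul_cpow {b d : ℂ} (hb : 0 < b.re) (hd : 0 < d.re)
    {z : ℝ} (hz : 0 ≤ z) (s : ℂ) :
    IntegrableOn (fun u : ℝ => (u : ℂ) ^ (b - 1) * ((1 - u : ℝ) : ℂ) ^ (d - 1) *
      ((1 + z * u : ℝ) : ℂ) ^ s) (Ioo 0 1) := by
  have hbeta : IntegrableOn (fun u : ℝ => (u : ℂ) ^ (b - 1) * ((1 - u : ℝ) : ℂ) ^ (d - 1))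
      (Icc 0 1) := by
    simpa using (intervalIntegrable_iff_integrableOn_Icc_of_le zero_le_one).1
      (betaIntegral_convergent hb hd)
  have hcont : ContinuousOn (fun u : ℝ => ((1 + z * u : ℝ) : ℂ) ^ s) (Icc 0 1) := by
    refine fun u hu => ContinuousAt.continuousWithinAt ?_
    refine ContinuousAt.cpow (by fun_prop) continuousAt_const (ofReal_mem_slitPlane.2 ?_)
    nlinarith [hu.1]
  exact (hbeta.mul_continuousOn hcont isCompact_Icc).mono_set Ioo_subset_Icc_self

lemma ofReal_exp_cpow (x : ℝ) (s : ℂ) : (Real.exp x : ℂ) ^ s = Complex.exp (x * s) := by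
  rw [cpow_def_of_ne_zero (ofReal_ne_zero.2 (Real.exp_pos x).ne'),
    ← ofReal_log (Real.exp_pos x).le, Real.log_exp]

lemma ofReal_mul_cpow {x y : ℝ} (hx : 0 ≤ x) (hy : 0 ≤ y) (s : ℂ) :
    ((x * y : ℝ) : ℂ) ^ s = (x : ℂ) ^ s * (y : ℂ) ^ s := by
  rw [ofReal_mul, mul_cpow_ofReal_nonneg hx hy]

lemma one_sub_exp_neg_eq {t : ℝ} (ht : t ≠ 0) :
    1 - Real.exp (-t) = Real.exp (-t) * (t * ((Real.exp t - 1) / t)) := by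
  rw [mul_div_cancel₀ _ ht, mul_sub, ← Real.exp_add, neg_add_cancel, Real.exp_zero, mul_one]

lemma one_add_mul_one_sub_exp_neg_eq {z α t : ℝ} (hz : 0 < z) (hα : Real.exp (-α) = z / (z + 1))
    (htα : t + α ≠ 0) :
    1 + z * (1 - Real.exp (-t)) =
      (1 + z) * (Real.exp (-t) * ((t + α) * ((Real.exp t - Real.exp (-α)) / (t + α)))) := by
  have hee : Real.exp (-t) * Real.exp t = 1 := by rw [← Real.exp_add, neg_add_cancel, Real.exp_zero]
  rw [mul_div_cancel₀ _ htα, hα]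
  field_simp
  linear_combination (-(1 + z) ^ 2) * hee

lemma exp_neg_log_div {z : ℝ} (hz : 0 < z) :
    Real.exp (-Real.log ((z + 1) / z)) = z / (z + 1) := by
  rw [Real.exp_neg, Real.exp_log (by positivity), inv_div]

lemma exp_neg_smul_integrand_comp_one_sub_exp_neg (a b c ω : ℂ) {z α t : ℝ} (hz : 0 < z)
    (hα : α = Real.log ((z + 1) / z)) (ht : 0 < t) :
    Real.exp (-t) •
      (((1 - Real.exp (-t) : ℝ) : ℂ) ^ (b - 1) *
        ((1 - (1 - Real.exp (-t)) : ℝ) : ℂ) ^ (c + ω - b - 1) *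
        ((1 + z * (1 - Real.exp (-t)) : ℝ) : ℂ) ^ (-a)) =
    ((1 + z : ℝ) : ℂ) ^ (-a) *
      ((t : ℂ) ^ (b - 1) * ((t + α : ℝ) : ℂ) ^ (-a) *
        ((((Real.exp t - 1) / t : ℝ) : ℂ) ^ (b - 1) * Complex.exp ((1 + a - c) * t) *
          (((Real.exp t - Real.exp (-α)) / (t + α) : ℝ) : ℂ) ^ (-a)) *
        Complex.exp (-ω * t)) := by
  have hα0 : 0 < α := hα ▸ Real.log_pos ((one_lt_div hz).2 (lt_add_one z))
  have hexpα : Real.exp (-α) = z / (z + 1) := hα ▸ exp_neg_log_div hz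
  have hE1 : 0 < (Real.exp t - 1) / t :=
    div_pos (sub_pos.2 (Real.one_lt_exp_iff.2 ht)) ht
  have hE2 : 0 < (Real.exp t - Real.exp (-α)) / (t + α) :=
    div_pos (sub_pos.2 (Real.exp_lt_exp.2 (by linarith))) (by linarith)
  have hexp : Complex.exp (-t) * Complex.exp (-t * (b - 1)) *
      Complex.exp (-t * (c + ω - b - 1)) * Complex.exp (-t * -a) =
      Complex.exp ((1 + a - c) * t) * Complex.exp (-ω * t) := by
    simp only [← Complex.exp_add]
    ring_nf
  rw [one_add_mul_one_sub_exp_neg_eq hz hexpα (by linarith), sub_sub_cancel,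
    one_sub_exp_neg_eq ht.ne', real_smul,
    ofReal_mul_cpow (Real.exp_pos _).le (by positivity),
    ofReal_mul_cpow ht.le hE1.le,
    ofReal_mul_cpow (by positivity) (by positivity),
    ofReal_mul_cpow (Real.exp_pos _).le (by positivity),
    ofReal_mul_cpow (by linarith) hE2.le]
  simp only [ofReal_exp_cpow]
  rw [ofReal_exp, ofReal_neg]
  linear_combination ((t : ℂ) ^ (b - 1) * (((Real.exp t - 1) / t : ℝ) : ℂ) ^ (b - 1) *
    ((1 + z : ℝ) : ℂ) ^ (-a) * ((t + α : ℝ) : ℂ) ^ (-a) *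
    (((Real.exp t - Real.exp (-α)) / (t + α) : ℝ) : ℂ) ^ (-a)) * hexp

/-- For Re b > 0, Re(c+ω−b) > 0, z > 0 real, α = ln((z+1)/z),
the Euler-type integral over (0,1) equals (1+z)^{-a} times a Laplace-type integral
over (0,∞) obtained by the change of variables u = 1 − e^{-t}, and both converge. -/
theorem gauss_integral_change_of_variables (a b c ω : ℂ) (hb : 0 < b.re)
    (hcb : 0 < (c + ω - b).re) (z : ℝ) (hz : 0 < z) (α : ℝ)
    (hα : α = Real.log ((z + 1) / z))
    (f : ℝ → ℂ)
    (hf : ∀ t : ℝ, f t =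
      (((Real.exp t - 1) / t : ℝ) : ℂ) ^ (b - 1) * Complex.exp ((1 + a - c) * t) *
        (((Real.exp t - Real.exp (-α)) / (t + α) : ℝ) : ℂ) ^ (-a)) :
    IntegrableOn
      (fun u : ℝ => (u : ℂ) ^ (b - 1) * ((1 - u : ℝ) : ℂ) ^ (c + ω - b - 1) *
        ((1 + z * u : ℝ) : ℂ) ^ (-a)) (Set.Ioo 0 1) ∧
    IntegrableOn
      (fun t : ℝ => (t : ℂ) ^ (b - 1) * ((t + α : ℝ) : ℂ) ^ (-a) * f t *
        Complex.exp (-ω * t)) (Set.Ioi 0) ∧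
    (∫ u in Set.Ioo (0:ℝ) 1,
        (u : ℂ) ^ (b - 1) * ((1 - u : ℝ) : ℂ) ^ (c + ω - b - 1) *
          ((1 + z * u : ℝ) : ℂ) ^ (-a)) =
      ((1 + z : ℝ) : ℂ) ^ (-a) *
        ∫ t in Set.Ioi (0:ℝ),
          (t : ℂ) ^ (b - 1) * ((t + α : ℝ) : ℂ) ^ (-a) * f t * Complex.exp (-ω * t) := by
  have hF := integrableOn_beta_mul_one_add_mul_cpow hb hcb hz.le (-a)
  have hsubst : EqOn (fun t : ℝ => Real.exp (-t) •
      (((1 - Real.exp (-t) : ℝ) : ℂ) ^ (b - 1) *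
        ((1 - (1 - Real.exp (-t)) : ℝ) : ℂ) ^ (c + ω - b - 1) *
        ((1 + z * (1 - Real.exp (-t)) : ℝ) : ℂ) ^ (-a)))
      (fun t => ((1 + z : ℝ) : ℂ) ^ (-a) *
        ((t : ℂ) ^ (b - 1) * ((t + α : ℝ) : ℂ) ^ (-a) * f t * Complex.exp (-ω * t))) (Ioi 0) :=
    fun t ht => by
      dsimp only
      rw [hf t]
      exact exp_neg_smul_integrand_comp_one_sub_exp_neg a b c ω hz hα ht
  have hne : ((1 + z : ℝ) : ℂ) ^ (-a) ≠ 0 :=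
    cpow_ne_zero_iff.2 (.inl (ofReal_ne_zero.2 (by linarith)))
  refine ⟨hF, ?_, ?_⟩
  · rw [integrableOn_Ioo_zero_one_iff_comp_one_sub_exp_neg, integrableOn_congr_fun hsubst
      measurableSet_Ioi] at hF
    exact (integrable_const_mul_iff (isUnit_iff_ne_zero.2 hne) _).1 hF
  · rw [integral_Ioo_zero_one_eq_comp_one_sub_exp_neg, setIntegral_congr_fun measurableSet_Ioi
      hsubst, integral_const_mul]
end

section
/- Let α > 0 and ω > 0 be real numbers and let a, b be complex numbers with Re b > 0. For each natural number n define Φ_n = (1/Γ(b)) ∫_0^∞ t^{n+b-1} (t+α)^{-a} e^{-ω t} dt. Then for every integer n ≥ 1 the three-term recurrence ω Φ_{n+1} = (n + b − a − α ω) Φ_n + α (b + n − 1) Φ_{n-1} holds. -/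
open MeasureTheory Set Complex Filter Topology

/-! Write `K_u(t) = t^u (t+α)^(-a) e^(-ωt)`, so that `Φ_n = Γ(b)⁻¹ ∫₀^∞ K_(n+b-1)`, and let
`G(t) = t^c (t+α)^(1-a) e^(-ωt)` with `c = n+b-1`. Since `Re c > 0` and `ω > 0`, `G` vanishes
at `0` and at `∞`. Splitting `(t+α)^(1-a) = (t+α)·(t+α)^(-a)` in its derivative gives
`G' = -ω K_(c+1) + (c+1-a-αω) K_c + cα K_(c-1)`, and integrating `G'` over `(0, ∞)` yields the
recurrence. -/

namespace PhiRecurrence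

noncomputable def kernel (α ω : ℝ) (u v : ℂ) (t : ℝ) : ℂ :=
  (t : ℂ) ^ u * ((t + α : ℝ) : ℂ) ^ v * exp (-(ω : ℂ) * t)

variable {α ω : ℝ}

lemma norm_kernel (hα : 0 < α) (u v : ℂ) {t : ℝ} (ht : 0 < t) :
    ‖kernel α ω u v t‖ = t ^ u.re * (t + α) ^ v.re * Real.exp (-ω * t) := by
  rw [kernel, norm_mul, norm_mul, norm_cpow_eq_rpow_re_of_pos ht,
    norm_cpow_eq_rpow_re_of_pos (by linarith), norm_exp]
  simp

lemma kernel_add_one_left (u v : ℂ) {t : ℝ} (ht : 0 < t) :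
    kernel α ω (u + 1) v t = t * kernel α ω u v t := by
  rw [kernel, kernel, cpow_add _ _ (by exact_mod_cast ht.ne'), cpow_one]
  ring

lemma kernel_add_one_right (hα : 0 < α) (u v : ℂ) {t : ℝ} (ht : 0 < t) :
    kernel α ω u (v + 1) t = kernel α ω (u + 1) v t + α * kernel α ω u v t := by
  have htα : ((t + α : ℝ) : ℂ) ≠ 0 := by exact_mod_cast (by linarith : 0 < t + α).ne'
  rw [kernel_add_one_left u v ht, kernel, kernel, cpow_add _ _ htα, cpow_one]
  push_cast
  ring

lemma hasDerivAt_kernel (hα : 0 < α) (u v : ℂ) {t : ℝ} (ht : 0 < t) :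
    HasDerivAt (kernel α ω u v)
      (u * kernel α ω (u - 1) v t + v * kernel α ω u (v - 1) t - ω * kernel α ω u v t) t := by
  have hpow : HasDerivAt (fun s : ℝ => (s : ℂ) ^ u) (u * (t : ℂ) ^ (u - 1)) t :=
    (hasStrictDerivAt_cpow_const (ofReal_mem_slitPlane.2 ht)).hasDerivAt.comp_ofReal
  have hshift : HasDerivAt (fun s : ℝ => ((s + α : ℝ) : ℂ) ^ v)
      (v * ((t + α : ℝ) : ℂ) ^ (v - 1)) t :=
    ((hasStrictDerivAt_cpow_const (ofReal_mem_slitPlane.2 (by linarith : 0 < t + α))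
      ).hasDerivAt.comp_ofReal).comp_add_const t α
  have hexp : HasDerivAt (fun s : ℝ => exp (-(ω : ℂ) * s)) (-(ω : ℂ) * exp (-(ω : ℂ) * t)) t := by
    simpa [mul_comm] using (((hasDerivAt_id (t : ℂ)).const_mul (-(ω : ℂ))).cexp).comp_ofReal
  refine ((hpow.mul hshift).mul hexp).congr_deriv ?_
  simp only [kernel, Pi.mul_apply]
  ring

lemma integrableOn_rpow_mul_exp_neg_mul {s : ℝ} (hs : -1 < s) (hω : 0 < ω) :
    IntegrableOn (fun t : ℝ => t ^ s * Real.exp (-ω * t)) (Ioi 0) := by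
  simpa only [Real.rpow_one] using integrableOn_rpow_mul_exp_neg_mul_rpow hs zero_lt_one hω

lemma rpow_add_le_mul_one_add_rpow_abs (hα : 0 < α) {t : ℝ} (ht : 0 ≤ t) (q : ℝ) :
    (t + α) ^ q ≤ (α ^ q + (1 + α) ^ q) * (1 + t ^ |q|) := by
  have htq : 0 ≤ t ^ |q| := Real.rpow_nonneg ht _
  rcases le_or_gt 0 q with hq | hq
  · rw [abs_of_nonneg hq] at htq ⊢
    have hle : (t + α) ^ q ≤ (1 + α) ^ q * (1 + t ^ q) := by
      rcases le_total t 1 with h | h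
      · calc (t + α) ^ q ≤ (1 + α) ^ q := Real.rpow_le_rpow (by positivity) (by linarith) hq
          _ ≤ (1 + α) ^ q * (1 + t ^ q) := le_mul_of_one_le_right (by positivity) (by linarith)
      · calc (t + α) ^ q ≤ ((1 + α) * t) ^ q := Real.rpow_le_rpow (by positivity) (by nlinarith) hq
          _ = (1 + α) ^ q * t ^ q := Real.mul_rpow (by positivity) ht
          _ ≤ (1 + α) ^ q * (1 + t ^ q) := by gcongr; linarith
    have : 0 ≤ α ^ q * (1 + t ^ q) := by positivity
    rw [add_mul]
    linarith
  · calc (t + α) ^ q ≤ α ^ q := Real.rpow_le_rpow_of_nonpos hα (by linarith) hq.le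
      _ ≤ α ^ q * (1 + t ^ |q|) := le_mul_of_one_le_right (by positivity) (by linarith)
      _ ≤ (α ^ q + (1 + α) ^ q) * (1 + t ^ |q|) := by
        gcongr
        exact le_add_of_nonneg_right (by positivity)

lemma norm_kernel_le (hα : 0 < α) (u v : ℂ) {t : ℝ} (ht : 0 < t) :
    ‖kernel α ω u v t‖ ≤ (α ^ v.re + (1 + α) ^ v.re) *
      (t ^ u.re * Real.exp (-ω * t) + t ^ (u.re + |v.re|) * Real.exp (-ω * t)) := by
  rw [norm_kernel hα u v ht, Real.rpow_add ht]
  calc t ^ u.re * (t + α) ^ v.re * Real.exp (-ω * t)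
      ≤ t ^ u.re * ((α ^ v.re + (1 + α) ^ v.re) * (1 + t ^ |v.re|)) * Real.exp (-ω * t) := by
        gcongr
        exact rpow_add_le_mul_one_add_rpow_abs hα ht.le _
    _ = _ := by ring

lemma integrableOn_kernel (hα : 0 < α) (hω : 0 < ω) {u : ℂ} (hu : -1 < u.re) (v : ℂ) :
    IntegrableOn (kernel α ω u v) (Ioi 0) := by
  have hcont : ContinuousOn (kernel α ω u v) (Ioi 0) := fun t ht =>
    (hasDerivAt_kernel hα u v ht).continuousAt.continuousWithinAt
  have hmaj := ((integrableOn_rpow_mul_exp_neg_mul hu hω).add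
    (integrableOn_rpow_mul_exp_neg_mul (s := u.re + |v.re|) (by linarith [abs_nonneg v.re]) hω)
    ).const_mul (α ^ v.re + (1 + α) ^ v.re)
  refine Integrable.mono' hmaj
    (hcont.aestronglyMeasurable measurableSet_Ioi) ?_
  filter_upwards [ae_restrict_mem measurableSet_Ioi] with t ht
  exact norm_kernel_le hα u v ht

lemma tendsto_kernel_atTop (hα : 0 < α) (hω : 0 < ω) (u v : ℂ) :
    Tendsto (kernel α ω u v) atTop (𝓝 0) := by
  have hmaj := ((tendsto_rpow_mul_exp_neg_mul_atTop_nhds_zero u.re ω hω).add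
    (tendsto_rpow_mul_exp_neg_mul_atTop_nhds_zero (u.re + |v.re|) ω hω)).const_mul
    (α ^ v.re + (1 + α) ^ v.re)
  rw [add_zero, mul_zero] at hmaj
  refine squeeze_zero_norm' ?_ hmaj
  filter_upwards [eventually_gt_atTop 0] with t ht
  exact norm_kernel_le hα u v ht

lemma kernel_zero {u : ℂ} (hu : u ≠ 0) (v : ℂ) : kernel α ω u v 0 = 0 := by
  simp [kernel, zero_cpow hu]

lemma continuousWithinAt_kernel_zero (hα : 0 < α) {u : ℂ} (hu : 0 < u.re) (v : ℂ) :
    ContinuousWithinAt (kernel α ω u v) (Ici 0) 0 := by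
  have hu0 : u ≠ 0 := fun h => by simp [h] at hu
  rw [← continuousWithinAt_Ioi_iff_Ici, ContinuousWithinAt, kernel_zero hu0]
  have hmaj : ContinuousAt (fun t : ℝ => (α ^ v.re + (1 + α) ^ v.re) *
      (t ^ u.re * Real.exp (-ω * t) + t ^ (u.re + |v.re|) * Real.exp (-ω * t))) 0 := by
    fun_prop (disch := positivity)
  have h := hmaj.tendsto.mono_left (nhdsWithin_le_nhds (s := Ioi 0))
  rw [Real.zero_rpow hu.ne', Real.zero_rpow (by positivity)] at h
  simp only [zero_mul, add_zero, mul_zero] at h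
  refine squeeze_zero_norm' ?_ h
  filter_upwards [self_mem_nhdsWithin] with t ht
  exact norm_kernel_le hα u v ht

lemma hasDerivAt_kernel_one_sub (hα : 0 < α) (a c : ℂ) {t : ℝ} (ht : 0 < t) :
    HasDerivAt (kernel α ω c (1 - a))
      (-ω * kernel α ω (c + 1) (-a) t + (c + 1 - a - α * ω) * kernel α ω c (-a) t
        + c * α * kernel α ω (c - 1) (-a) t) t := by
  refine (hasDerivAt_kernel hα c (1 - a) ht).congr_deriv ?_
  rw [sub_sub_cancel_left, show (1 : ℂ) - a = -a + 1 by ring, kernel_add_one_right hα _ _ ht,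
    kernel_add_one_right hα _ _ ht, sub_add_cancel]
  ring

theorem integral_kernel_recurrence (hα : 0 < α) (hω : 0 < ω) (a : ℂ) {c : ℂ} (hc : 0 < c.re) :
    ω * ∫ t in Ioi 0, kernel α ω (c + 1) (-a) t =
      (c + 1 - a - α * ω) * (∫ t in Ioi 0, kernel α ω c (-a) t)
        + c * α * ∫ t in Ioi 0, kernel α ω (c - 1) (-a) t := by
  have hI₂ := integrableOn_kernel hα hω (u := c + 1) (by simp only [add_re, one_re]; linarith) (-a)
  have hI₁ := integrableOn_kernel hα hω (u := c) (by linarith) (-a)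
  have hI₀ := integrableOn_kernel hα hω (u := c - 1) (by simpa using hc) (-a)
  have hI₂₁ : IntegrableOn (fun t => -ω * kernel α ω (c + 1) (-a) t
      + (c + 1 - a - α * ω) * kernel α ω c (-a) t) (Ioi 0) :=
    (hI₂.const_mul _).add (hI₁.const_mul _)
  have hftc := integral_Ioi_of_hasDerivAt_of_tendsto (continuousWithinAt_kernel_zero hα hc _)
    (fun t ht => hasDerivAt_kernel_one_sub hα a c ht) (hI₂₁.add (hI₀.const_mul _))
    (tendsto_kernel_atTop hα hω c (1 - a))
  rw [integral_add hI₂₁ (hI₀.const_mul _),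
    integral_add (hI₂.const_mul _) (hI₁.const_mul _), integral_const_mul, integral_const_mul,
    integral_const_mul, kernel_zero (fun h => by simp [h] at hc)] at hftc
  linear_combination -hftc

end PhiRecurrence

/-- For α, ω > 0 real and a, b complex with Re b > 0, the integrals
Φ_n = (1/Γ(b)) ∫_0^∞ t^{n+b-1} (t+α)^{-a} e^{-ωt} dt satisfy, for all n ≥ 1,
ω Φ_{n+1} = (n + b − a − αω) Φ_n + α(b + n − 1) Φ_{n-1}. -/
theorem Phi_three_term_recurrence (α ω : ℝ) (hα : 0 < α) (hω : 0 < ω)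
    (a b : ℂ) (hb : 0 < b.re) (Φ : ℕ → ℂ)
    (hΦ : ∀ n : ℕ, Φ n = (1 / Complex.Gamma b) *
      ∫ t in Set.Ioi (0:ℝ),
        (t : ℂ) ^ ((n : ℂ) + b - 1) * ((t + α : ℝ) : ℂ) ^ (-a) * Complex.exp (-(ω : ℂ) * t)) :
    ∀ n : ℕ, 1 ≤ n →
      (ω : ℂ) * Φ (n + 1) =
        ((n : ℂ) + b - a - (α : ℂ) * (ω : ℂ)) * Φ n + (α : ℂ) * (b + (n : ℂ) - 1) * Φ (n - 1) := by
  intro n hn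
  obtain ⟨m, rfl⟩ := Nat.exists_eq_add_of_le' hn
  have hΦ_kernel (k : ℕ) :
      Φ k = (1 / Gamma b) * ∫ t in Ioi 0, PhiRecurrence.kernel α ω (k + b - 1) (-a) t :=
    hΦ k
  have hc : 0 < ((m : ℂ) + b).re := by simp only [add_re, natCast_re]; positivity
  rw [Nat.add_sub_cancel, hΦ_kernel (m + 1 + 1), hΦ_kernel (m + 1), hΦ_kernel m]
  push_cast
  rw [show (m : ℂ) + 1 + 1 + b - 1 = m + b + 1 by ring, show (m : ℂ) + 1 + b - 1 = m + b by ring]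
  linear_combination (1 / Gamma b) * PhiRecurrence.integral_kernel_recurrence hα hω a hc
end

section
/- Let α > 0 and ω > 0 be real numbers, let a, b be complex numbers with Re a > 0 and Re b > 0, and let n be a natural number. Then (1/Γ(b)) ∫_0^∞ t^{n+b-1} (t+α)^{-a} e^{-ω t} dt = ((b)_n · ω^{a-n-b} / Γ(a)) ∫_0^∞ s^{a-1} (1+s)^{-n-b} e^{-α ω s} ds, where both integrals converge absolutely. (Both sides are integral representations of the same Kummer U-function: Φ_n = (b)_n α^{n+b-a} U(n+b, n+b+1−a, αω) = (b)_n ω^{a-n-b} U(a, a+1−n−b, αω).) -/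
open MeasureTheory Set Complex Finset

/-!
With `c = n + b`, both integrals come from the kernel `x^(a-1) t^(c-1) e^{-(αx + xt + ωt)}` on the
positive quadrant. Integrating out `x` gives `Γ(a) t^(c-1) (t+α)^(-a) e^{-ωt}`, integrating out
`t` gives `Γ(c) x^(a-1) (x+ω)^(-c) e^{-αx}`, and Fubini equates the two. The substitution
`x = ωs` and `Γ(n+b) = (b)_n Γ(b)` turn this into the identity.
-/

theorem ascPochhammer_eval_eq_prod_range {R : Type*} [CommSemiring R] (n : ℕ) (r : R) :
    (ascPochhammer R n).eval r = ∏ j ∈ range n, (r + j) := by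
  induction n with
  | zero => simp
  | succ n ih => simp [ascPochhammer_succ_right, ih, prod_range_succ]

theorem Complex.Gamma_add_nat_eq_prod_mul_Gamma {b : ℂ} (hb : ∀ k : ℕ, b ≠ -k) (n : ℕ) :
    Gamma (b + n) = (∏ j ∈ range n, (b + j)) * Gamma b := by
  rw [← ascPochhammer_eval_eq_prod_range, ← Gamma_add_nat_div_Gamma_eq b hb,
    div_mul_cancel₀ _ (Gamma_ne_zero hb)]

theorem integrableOn_cpow_mul_exp_neg_mul_Ioi {c : ℂ} (hc : 0 < c.re) {r : ℝ} (hr : 0 < r) :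
    IntegrableOn (fun t : ℝ => (t : ℂ) ^ (c - 1) * cexp (-r * t)) (Ioi 0) := by
  have hreal : IntegrableOn (fun t : ℝ => t ^ (c.re - 1) * Real.exp (-r * t ^ (1 : ℝ))) (Ioi 0) :=
    integrableOn_rpow_mul_exp_neg_mul_rpow (by linarith) zero_lt_one hr
  refine hreal.mono' (by fun_prop) ((ae_restrict_iff' measurableSet_Ioi).2 ?_)
  filter_upwards with t (ht : 0 < t)
  rw [norm_mul, norm_cpow_eq_rpow_re_of_pos ht, ← ofReal_neg, ← ofReal_mul, norm_exp_ofReal,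
    Real.rpow_one, sub_re, one_re]

theorem integrableOn_cpow_mul_bdd_mul_exp_neg_mul_Ioi {c : ℂ} (hc : 0 < c.re) {r : ℝ} (hr : 0 < r)
    {g : ℝ → ℂ} (hg : Measurable g) {C : ℝ} (hC : ∀ t > 0, ‖g t‖ ≤ C) :
    IntegrableOn (fun t : ℝ => (t : ℂ) ^ (c - 1) * g t * cexp (-r * t)) (Ioi 0) := by
  have h := (integrableOn_cpow_mul_exp_neg_mul_Ioi hc hr).bdd_mul hg.aestronglyMeasurable
    ((ae_restrict_iff' measurableSet_Ioi).2 (ae_of_all _ hC))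
  exact h.congr (ae_of_all _ fun t => by ring)

theorem norm_ofReal_add_cpow_neg_le {t β : ℝ} (ht : 0 ≤ t) (hβ : 0 < β) {a : ℂ} (ha : 0 ≤ a.re) :
    ‖((t + β : ℝ) : ℂ) ^ (-a)‖ ≤ β ^ (-a.re) := by
  rw [norm_cpow_eq_rpow_re_of_pos (by linarith), neg_re]
  exact Real.rpow_le_rpow_of_nonpos hβ (by linarith) (by linarith)

noncomputable def tricomiKernel (a c : ℂ) (α ω x t : ℝ) : ℂ :=
  (x : ℂ) ^ (a - 1) * (t : ℂ) ^ (c - 1) * cexp (-(α * x + x * t + ω * t))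

theorem tricomiKernel_swap (a c : ℂ) (α ω x t : ℝ) :
    tricomiKernel a c α ω x t = tricomiKernel c a ω α t x := by
  unfold tricomiKernel
  ring_nf

section tricomiKernel

variable {a c : ℂ} {α ω : ℝ}

theorem integrable_uncurry_tricomiKernel (ha : 0 < a.re) (hc : 0 < c.re) (hα : 0 < α)
    (hω : 0 < ω) :
    Integrable (Function.uncurry (tricomiKernel a c α ω))
      ((volume.restrict (Ioi 0)).prod (volume.restrict (Ioi 0))) := by
  have hprod := (integrableOn_cpow_mul_exp_neg_mul_Ioi ha hα).mul_prod
    (integrableOn_cpow_mul_exp_neg_mul_Ioi hc hω)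
  have hbdd : ∀ᵐ p ∂(volume.restrict (Ioi 0)).prod (volume.restrict (Ioi 0)),
      ‖cexp (-((p.1 : ℝ) * (p.2 : ℝ) : ℂ))‖ ≤ 1 := by
    rw [Measure.prod_restrict, ae_restrict_iff' (measurableSet_Ioi.prod measurableSet_Ioi)]
    filter_upwards with p ⟨hx, ht⟩
    rw [← ofReal_mul, ← ofReal_neg, norm_exp_ofReal, Real.exp_le_one_iff, neg_nonpos]
    exact mul_nonneg hx.le ht.le
  refine (hprod.bdd_mul (by fun_prop) hbdd).congr (ae_of_all _ fun ⟨x, t⟩ => ?_)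
  simp only [Function.uncurry_apply_pair, tricomiKernel, neg_add, exp_add, neg_mul]
  ring

theorem integral_tricomiKernel_fst (ha : 0 < a.re) {t : ℝ} (ht : 0 < t + α) :
    ∫ x : ℝ in Ioi 0, tricomiKernel a c α ω x t =
      Gamma a * ((t : ℂ) ^ (c - 1) * ((t + α : ℝ) : ℂ) ^ (-a) * cexp (-ω * t)) := by
  have hsplit : ∀ x : ℝ, tricomiKernel a c α ω x t =
      ((t : ℂ) ^ (c - 1) * cexp (-ω * t)) * ((x : ℂ) ^ (a - 1) * cexp (-((t + α : ℝ) * x))) := by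
    intro x
    rw [tricomiKernel, mul_mul_mul_comm, ← exp_add]
    push_cast
    ring_nf
  have hΓ : (1 / ((t + α : ℝ) : ℂ)) ^ a = ((t + α : ℝ) : ℂ) ^ (-a) := by
    rw [one_div, inv_cpow _ _ (by rw [arg_ofReal_of_nonneg ht.le]; exact Real.pi_ne_zero.symm),
      cpow_neg]
  simp_rw [hsplit]
  rw [integral_const_mul, integral_cpow_mul_exp_neg_mul_Ioi ha ht, hΓ]
  ring

theorem integral_tricomiKernel_snd (hc : 0 < c.re) {x : ℝ} (hx : 0 < x + ω) :
    ∫ t : ℝ in Ioi 0, tricomiKernel a c α ω x t =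
      Gamma c * ((x : ℂ) ^ (a - 1) * ((x + ω : ℝ) : ℂ) ^ (-c) * cexp (-α * x)) := by
  simp_rw [tricomiKernel_swap a c α ω x]
  exact integral_tricomiKernel_fst hc hx

end tricomiKernel

theorem integral_Ioi_cpow_mul_add_cpow_neg_mul_exp_rescale {ω : ℝ} (hω : 0 < ω) (a c : ℂ) (α : ℝ) :
    ∫ x : ℝ in Ioi 0, (x : ℂ) ^ (a - 1) * ((x + ω : ℝ) : ℂ) ^ (-c) * cexp (-α * x) =
      (ω : ℂ) ^ (a - c) *
        ∫ s : ℝ in Ioi 0, (s : ℂ) ^ (a - 1) * ((1 + s : ℝ) : ℂ) ^ (-c) * cexp (-α * ω * s) := by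
  have hωC : (ω : ℂ) ≠ 0 := ofReal_ne_zero.mpr hω.ne'
  have hscale : ∀ s ∈ Ioi (0 : ℝ),
      ((ω * s : ℝ) : ℂ) ^ (a - 1) * ((ω * s + ω : ℝ) : ℂ) ^ (-c) * cexp (-α * ↑(ω * s)) =
        ((ω : ℂ) ^ (a - 1) * (ω : ℂ) ^ (-c)) *
          ((s : ℂ) ^ (a - 1) * ((1 + s : ℝ) : ℂ) ^ (-c) * cexp (-α * ω * s)) := by
    intro s (hs : 0 < s)
    rw [show ω * s + ω = ω * (1 + s) by ring, ofReal_mul, ofReal_mul,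
      mul_cpow_ofReal_nonneg hω.le hs.le, mul_cpow_ofReal_nonneg hω.le (by linarith),
      ← mul_assoc (-(α : ℂ))]
    ring
  have hsub := integral_comp_mul_left_Ioi
    (fun x : ℝ => (x : ℂ) ^ (a - 1) * ((x + ω : ℝ) : ℂ) ^ (-c) * cexp (-α * x)) 0 hω
  rw [mul_zero, setIntegral_congr_fun measurableSet_Ioi hscale, integral_const_mul,
    eq_inv_smul_iff₀ hω.ne', real_smul] at hsub
  rw [← hsub, ← mul_assoc]
  congr 1
  rw [show a - c = 1 + (a - 1 + -c) by ring, cpow_add _ _ hωC, cpow_add _ _ hωC, cpow_one]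

theorem Gamma_mul_integral_Ioi_eq_Gamma_mul_cpow_mul_integral_Ioi {a c : ℂ} (ha : 0 < a.re)
    (hc : 0 < c.re) {α ω : ℝ} (hα : 0 < α) (hω : 0 < ω) :
    Gamma a * ∫ t : ℝ in Ioi 0, (t : ℂ) ^ (c - 1) * ((t + α : ℝ) : ℂ) ^ (-a) * cexp (-ω * t) =
      Gamma c * (ω : ℂ) ^ (a - c) *
        ∫ s : ℝ in Ioi 0, (s : ℂ) ^ (a - 1) * ((1 + s : ℝ) : ℂ) ^ (-c) * cexp (-α * ω * s) := by
  calc Gamma a * ∫ t : ℝ in Ioi 0, (t : ℂ) ^ (c - 1) * ((t + α : ℝ) : ℂ) ^ (-a) * cexp (-ω * t)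
      = ∫ t : ℝ in Ioi 0, ∫ x : ℝ in Ioi 0, tricomiKernel a c α ω x t := by
        rw [← integral_const_mul]
        refine setIntegral_congr_fun measurableSet_Ioi fun t (ht : 0 < t) => ?_
        rw [integral_tricomiKernel_fst ha (by linarith)]
    _ = ∫ x : ℝ in Ioi 0, ∫ t : ℝ in Ioi 0, tricomiKernel a c α ω x t :=
        (integral_integral_swap (integrable_uncurry_tricomiKernel ha hc hα hω)).symm
    _ = Gamma c *
          ∫ x : ℝ in Ioi 0, (x : ℂ) ^ (a - 1) * ((x + ω : ℝ) : ℂ) ^ (-c) * cexp (-α * x) := by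
        rw [← integral_const_mul]
        refine setIntegral_congr_fun measurableSet_Ioi fun x (hx : 0 < x) => ?_
        rw [integral_tricomiKernel_snd hc (by linarith)]
    _ = _ := by
        rw [integral_Ioi_cpow_mul_add_cpow_neg_mul_exp_rescale hω, mul_assoc]

/-- For α, ω > 0, Re a > 0, Re b > 0 and n ∈ ℕ,
(1/Γ(b)) ∫_0^∞ t^{n+b-1} (t+α)^{-a} e^{-ωt} dt
 = ((b)_n ω^{a-n-b} / Γ(a)) ∫_0^∞ s^{a-1} (1+s)^{-n-b} e^{-αωs} ds,
with both integrals absolutely convergent. -/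
theorem Phi_two_integral_representations (α ω : ℝ) (hα : 0 < α) (hω : 0 < ω)
    (a b : ℂ) (ha : 0 < a.re) (hb : 0 < b.re) (n : ℕ) :
    IntegrableOn
      (fun t : ℝ => (t : ℂ) ^ ((n : ℂ) + b - 1) * ((t + α : ℝ) : ℂ) ^ (-a) *
        Complex.exp (-(ω : ℂ) * t)) (Set.Ioi 0) ∧
    IntegrableOn
      (fun s : ℝ => (s : ℂ) ^ (a - 1) * ((1 + s : ℝ) : ℂ) ^ (-(n : ℂ) - b) *
        Complex.exp (-(α : ℂ) * (ω : ℂ) * s)) (Set.Ioi 0) ∧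
    (1 / Complex.Gamma b) *
        (∫ t in Set.Ioi (0:ℝ),
          (t : ℂ) ^ ((n : ℂ) + b - 1) * ((t + α : ℝ) : ℂ) ^ (-a) *
            Complex.exp (-(ω : ℂ) * t)) =
      ((∏ j ∈ Finset.range n, (b + j)) * (ω : ℂ) ^ (a - (n : ℂ) - b) / Complex.Gamma a) *
        ∫ s in Set.Ioi (0:ℝ),
          (s : ℂ) ^ (a - 1) * ((1 + s : ℝ) : ℂ) ^ (-(n : ℂ) - b) *
            Complex.exp (-(α : ℂ) * (ω : ℂ) * s) := by
  have hc : 0 < ((n : ℂ) + b).re := by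
    rw [add_re, natCast_re]; positivity
  have hb_nat : ∀ k : ℕ, b ≠ -k := fun k hk => by
    simp only [hk, neg_re, natCast_re, Left.neg_pos_iff] at hb
    exact (Nat.cast_nonneg k).not_gt hb
  have hΓ : Gamma ((n : ℂ) + b) = (∏ j ∈ range n, (b + j)) * Gamma b := by
    rw [add_comm]; exact Gamma_add_nat_eq_prod_mul_Gamma hb_nat n
  have hkey := Gamma_mul_integral_Ioi_eq_Gamma_mul_cpow_mul_integral_Ioi ha hc hα hω
  rw [hΓ] at hkey
  rw [← neg_add', sub_sub]
  refine ⟨integrableOn_cpow_mul_bdd_mul_exp_neg_mul_Ioi hc hω (by fun_prop)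
    fun t ht => norm_ofReal_add_cpow_neg_le ht.le hα ha.le, ?_, ?_⟩
  · have h1s : ∀ s > (0 : ℝ), ‖((1 + s : ℝ) : ℂ) ^ (-((n : ℂ) + b))‖ ≤ 1 ^ (-((n : ℂ) + b).re) :=
      fun s hs => by rw [add_comm]; exact norm_ofReal_add_cpow_neg_le hs.le one_pos hc.le
    simpa only [ofReal_mul, neg_mul] using
      integrableOn_cpow_mul_bdd_mul_exp_neg_mul_Ioi ha (mul_pos hα hω) (by fun_prop) h1s
  · refine mul_left_cancel₀ (Gamma_ne_zero_of_re_pos ha) ?_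
    rw [mul_left_comm, hkey]
    field_simp [Gamma_ne_zero_of_re_pos ha, Gamma_ne_zero_of_re_pos hb]
end

section
/- Let z > 0 be real, set α = ln((z+1)/z) and d = z α, let b be a real number, and define f : [0,∞) → ℝ by f(0) = 1 and, for t > 0, f(t) = ( ((1−e^{−t})/t) · ((e^t − e^{−α})/(t+α)) · (α/(1−e^{−α})) )^{b}. Then f is twice differentiable from the right at t = 0 and its second Taylor coefficient f₂ = f″(0)/2 equals (b/(24 d²)) ( 12 z² + 12 b z² + d² − 12 d² z − 12 d² z² − 24 b d z² + 12 b d² z + 12 b d² z² + 3 b d² − 12 b d z ). -/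
open Set Filter Topology

/-!
Let `E = expSlope`, i.e. `E x = (eˣ - 1) / x` with `E 0 = 1`; it is entire and positive on `ℝ`.
For `t > 0` the base of the power is `E (-t) * E (t + α) / E α`, so on `[0, ∞)` the function `f`
agrees with the entire function `g t = exp (b * h t)`, `h t = L (-t) + L (t + α) - L α`, where
`L = logExpSlope = log ∘ E`. Hence the one-sided derivatives of `f` at `0` are those of `g`, and
`g''(0) = b h''(0) + (b h'(0))²` with `h'(0) = L'(α) - L'(0)` and `h''(0) = L''(0) + L''(α)`.
Differentiating `x E x = eˣ - 1` gives `(n + 1) E⁽ⁿ⁾ x + x E⁽ⁿ⁺¹⁾ x = eˣ`, hence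
`E⁽ⁿ⁾ 0 = 1 / (n + 1)` and closed forms for `L'`, `L''` away from `0`; finally `e^α = (z + 1) / z`.
-/

theorem iteratedDeriv_succ_id_mul {𝕜 : Type*} [NontriviallyNormedField 𝕜] {F : 𝕜 → 𝕜} {n : ℕ}
    (hF : ContDiff 𝕜 (n + 1 : ℕ) F) (x : 𝕜) :
    iteratedDeriv (n + 1) (fun y => y * F y) x =
      (n + 1) * iteratedDeriv n F x + x * iteratedDeriv (n + 1) F x := by
  rw [iteratedDeriv_fun_mul (f := fun y => y) contDiffAt_id hF.contDiffAt, Finset.sum_range_succ',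
    Finset.sum_range_succ']
  simp [iteratedDeriv_fun_id]

section OneSided

variable {𝕜 F : Type*} [NontriviallyNormedField 𝕜] [NormedAddCommGroup F] [NormedSpace 𝕜 F]
  {f g : 𝕜 → F} {s : Set 𝕜}

theorem derivWithin_eqOn_deriv_of_eqOn (hfg : EqOn f g s) (hs : UniqueDiffOn 𝕜 s)
    (hg : Differentiable 𝕜 g) : EqOn (derivWithin f s) (deriv g) s :=
  fun x hx => (derivWithin_congr hfg (hfg hx)).trans ((hg x).derivWithin (hs x hx))

theorem derivWithin_derivWithin_eq_of_eqOn {x : 𝕜} (hfg : EqOn f g s) (hs : UniqueDiffOn 𝕜 s)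
    (hx : x ∈ s) (hg : ContDiff 𝕜 2 g) :
    (∀ᶠ t in 𝓝[s] x, DifferentiableWithinAt 𝕜 f s t) ∧
      DifferentiableWithinAt 𝕜 (derivWithin f s) s x ∧
      derivWithin (derivWithin f s) s x = deriv (deriv g) x := by
  have hg₁ : Differentiable 𝕜 g := hg.differentiable two_ne_zero
  have hg₂ : Differentiable 𝕜 (deriv g) := hg.differentiable_deriv_two
  have hf' : EqOn (derivWithin f s) (deriv g) s := derivWithin_eqOn_deriv_of_eqOn hfg hs hg₁
  exact ⟨eventually_mem_nhdsWithin.mono fun t ht =>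
      (hg₁ t).differentiableWithinAt.congr hfg (hfg ht),
    (hg₂ x).differentiableWithinAt.congr hf' (hf' hx),
    derivWithin_eqOn_deriv_of_eqOn hf' hs hg₂ hx⟩

end OneSided

theorem deriv_deriv_exp_const_mul {h : ℝ → ℝ} (hh : ContDiff ℝ 2 h) (b x : ℝ) :
    deriv (deriv fun t => Real.exp (b * h t)) x =
      Real.exp (b * h x) * (b * deriv (deriv h) x + (b * deriv h x) ^ 2) := by
  have hh₁ : Differentiable ℝ h := hh.differentiable two_ne_zero
  have hh₂ : Differentiable ℝ (deriv h) := hh.differentiable_deriv_two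
  have hderiv : deriv (fun t => Real.exp (b * h t)) =
      fun t => Real.exp (b * h t) * (b * deriv h t) :=
    funext fun t => (((hh₁ t).hasDerivAt.const_mul b).exp).deriv
  rw [hderiv,
    ((((hh₁ x).hasDerivAt.const_mul b).exp).fun_mul ((hh₂ x).hasDerivAt.const_mul b)).deriv]
  ring

theorem deriv_comp_neg_add_comp_add_const {φ : ℝ → ℝ} (hφ : Differentiable ℝ φ) (c k : ℝ) :
    deriv (fun t => φ (-t) + φ (t + c) - k) = fun t => -deriv φ (-t) + deriv φ (t + c) := by
  ext t
  rw [deriv_sub_const, deriv_fun_add (by fun_prop) (by fun_prop), deriv_comp_neg,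
    deriv_comp_add_const]

theorem deriv_deriv_comp_neg_add_comp_add_const {φ : ℝ → ℝ} (hφ : ContDiff ℝ 2 φ) (c k x : ℝ) :
    deriv (deriv fun t => φ (-t) + φ (t + c) - k) x =
      deriv (deriv φ) (-x) + deriv (deriv φ) (x + c) := by
  have hφ' : Differentiable ℝ (deriv φ) := hφ.differentiable_deriv_two
  rw [deriv_comp_neg_add_comp_add_const (hφ.differentiable two_ne_zero),
    deriv_fun_add (by fun_prop) (by fun_prop), deriv.fun_neg, deriv_comp_neg, deriv_comp_add_const,
    neg_neg]

theorem Real.exp_sub_one_ne_zero {x : ℝ} (hx : x ≠ 0) : Real.exp x - 1 ≠ 0 :=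
  sub_ne_zero.2 fun h => hx (Real.exp_eq_one_iff x |>.1 h)

noncomputable def expSlope : ℝ → ℝ := dslope Real.exp 0

theorem expSlope_of_ne_zero {x : ℝ} (hx : x ≠ 0) : expSlope x = (Real.exp x - 1) / x := by
  rw [expSlope, dslope_of_ne _ hx, slope_def_field, Real.exp_zero, sub_zero]

theorem expSlope_zero : expSlope 0 = 1 := by
  rw [expSlope, dslope_same, Real.deriv_exp, Real.exp_zero]

theorem mul_expSlope (x : ℝ) : x * expSlope x = Real.exp x - 1 := by
  rcases eq_or_ne x 0 with rfl | hx
  · simp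
  · rw [expSlope_of_ne_zero hx]
    field_simp

theorem expSlope_pos (x : ℝ) : 0 < expSlope x := by
  rcases lt_trichotomy x 0 with hx | rfl | hx
  · rw [expSlope_of_ne_zero hx.ne]
    exact div_pos_of_neg_of_neg (by linarith [Real.exp_lt_one_iff.2 hx]) hx
  · simp [expSlope_zero]
  · rw [expSlope_of_ne_zero hx.ne']
    exact div_pos (by linarith [Real.one_lt_exp_iff.2 hx]) hx

theorem analyticOnNhd_expSlope : AnalyticOnNhd ℝ expSlope univ := by
  intro x _
  rcases eq_or_ne x 0 with rfl | hx
  · obtain ⟨p, hp⟩ := analyticAt_rexp (x := 0)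
    exact hp.has_fpower_series_dslope_fslope.analyticAt
  · have h : AnalyticAt ℝ (fun y => (Real.exp y - 1) / y) x :=
      (analyticAt_rexp.sub analyticAt_const).div analyticAt_id hx
    refine h.congr ?_
    filter_upwards [compl_singleton_mem_nhds hx] with y hy
    rw [expSlope_of_ne_zero hy]

theorem contDiff_expSlope {n : WithTop ℕ∞} : ContDiff ℝ n expSlope :=
  analyticOnNhd_expSlope.contDiff

theorem differentiable_expSlope : Differentiable ℝ expSlope :=
  contDiff_expSlope.differentiable one_ne_zero

theorem differentiable_deriv_expSlope : Differentiable ℝ (deriv expSlope) :=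
  (contDiff_expSlope (n := 2)).differentiable_deriv_two

theorem add_one_mul_iteratedDeriv_expSlope_add (n : ℕ) (x : ℝ) :
    (n + 1) * iteratedDeriv n expSlope x + x * iteratedDeriv (n + 1) expSlope x = Real.exp x := by
  rw [← iteratedDeriv_succ_id_mul contDiff_expSlope, funext mul_expSlope, iteratedDeriv_succ',
    deriv_sub_const_fun, Real.deriv_exp, iteratedDeriv_eq_iterate, Real.iter_deriv_exp]

theorem iteratedDeriv_expSlope_zero (n : ℕ) : iteratedDeriv n expSlope 0 = 1 / (n + 1) := by
  have h := add_one_mul_iteratedDeriv_expSlope_add n 0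
  rw [zero_mul, add_zero, Real.exp_zero] at h
  field_simp
  linarith

theorem deriv_expSlope_of_ne_zero {x : ℝ} (hx : x ≠ 0) :
    deriv expSlope x = (Real.exp x - expSlope x) / x := by
  have h := add_one_mul_iteratedDeriv_expSlope_add 0 x
  simp only [iteratedDeriv_zero, zero_add, iteratedDeriv_one, Nat.cast_zero, one_mul] at h
  field_simp
  linarith

theorem deriv_deriv_expSlope_of_ne_zero {x : ℝ} (hx : x ≠ 0) :
    deriv (deriv expSlope) x = (Real.exp x - 2 * deriv expSlope x) / x := by
  have h := add_one_mul_iteratedDeriv_expSlope_add 1 x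
  simp only [iteratedDeriv_succ, iteratedDeriv_zero, Nat.cast_one] at h
  field_simp
  linarith

noncomputable def logExpSlope (x : ℝ) : ℝ := Real.log (expSlope x)

@[fun_prop]
theorem contDiff_logExpSlope {n : WithTop ℕ∞} : ContDiff ℝ n logExpSlope :=
  contDiff_expSlope.log fun x => (expSlope_pos x).ne'

theorem differentiable_logExpSlope : Differentiable ℝ logExpSlope :=
  contDiff_logExpSlope.differentiable one_ne_zero

theorem logExpSlope_zero : logExpSlope 0 = 0 := by
  rw [logExpSlope, expSlope_zero, Real.log_one]

theorem deriv_logExpSlope (x : ℝ) : deriv logExpSlope x = deriv expSlope x / expSlope x :=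
  deriv.log (differentiable_expSlope x) (expSlope_pos x).ne'

theorem deriv_deriv_logExpSlope (x : ℝ) :
    deriv (deriv logExpSlope) x =
      deriv (deriv expSlope) x / expSlope x - (deriv expSlope x / expSlope x) ^ 2 := by
  rw [funext deriv_logExpSlope, deriv_fun_div (differentiable_deriv_expSlope x)
    (differentiable_expSlope x) (expSlope_pos x).ne']
  field_simp

theorem deriv_logExpSlope_zero : deriv logExpSlope 0 = 1 / 2 := by
  have h1 := iteratedDeriv_expSlope_zero 1
  rw [iteratedDeriv_one] at h1
  rw [deriv_logExpSlope, h1, expSlope_zero]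
  norm_num

theorem deriv_deriv_logExpSlope_zero : deriv (deriv logExpSlope) 0 = 1 / 12 := by
  have h1 := iteratedDeriv_expSlope_zero 1
  have h2 := iteratedDeriv_expSlope_zero 2
  rw [iteratedDeriv_one] at h1
  rw [iteratedDeriv_succ, iteratedDeriv_one] at h2
  rw [deriv_deriv_logExpSlope, h1, h2, expSlope_zero]
  norm_num

theorem deriv_logExpSlope_of_ne_zero {x : ℝ} (hx : x ≠ 0) :
    deriv logExpSlope x = Real.exp x / (Real.exp x - 1) - 1 / x := by
  have := Real.exp_sub_one_ne_zero hx
  rw [deriv_logExpSlope, deriv_expSlope_of_ne_zero hx, expSlope_of_ne_zero hx]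
  field_simp

theorem deriv_deriv_logExpSlope_of_ne_zero {x : ℝ} (hx : x ≠ 0) :
    deriv (deriv logExpSlope) x = 1 / x ^ 2 - Real.exp x / (Real.exp x - 1) ^ 2 := by
  have := Real.exp_sub_one_ne_zero hx
  rw [deriv_deriv_logExpSlope, deriv_deriv_expSlope_of_ne_zero hx, deriv_expSlope_of_ne_zero hx,
    expSlope_of_ne_zero hx]
  field_simp
  ring

theorem expSlope_neg_mul_expSlope_add_div_expSlope {t α : ℝ} (ht : t ≠ 0) (htα : t + α ≠ 0)
    (hα : α ≠ 0) :
    expSlope (-t) * expSlope (t + α) / expSlope α =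
      (1 - Real.exp (-t)) / t * ((Real.exp t - Real.exp (-α)) / (t + α)) *
        (α / (1 - Real.exp (-α))) := by
  have := Real.exp_sub_one_ne_zero hα
  rw [expSlope_of_ne_zero (neg_ne_zero.2 ht), expSlope_of_ne_zero htα, expSlope_of_ne_zero hα,
    Real.exp_add, Real.exp_neg, Real.exp_neg]
  field_simp
  ring

theorem expSlope_neg_mul_expSlope_add_div_expSlope_rpow (t α b : ℝ) :
    (expSlope (-t) * expSlope (t + α) / expSlope α) ^ b =
      Real.exp (b * (logExpSlope (-t) + logExpSlope (t + α) - logExpSlope α)) := by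
  have hE := expSlope_pos
  rw [Real.rpow_def_of_pos (div_pos (mul_pos (hE _) (hE _)) (hE α)),
    Real.log_div (mul_pos (hE _) (hE _)).ne' (hE α).ne', Real.log_mul (hE _).ne' (hE _).ne',
    mul_comm]
  rfl

/-- With z > 0, α = ln((z+1)/z), d = zα, b real, and
f(t) = (((1−e^{−t})/t)·((e^t − e^{−α})/(t+α))·(α/(1−e^{−α})))^b for t > 0, f(0) = 1,
the function f is twice differentiable from the right at 0 and its second Taylor
coefficient f₂ = f″(0)/2 equals
(b/(24d²))(12z² + 12bz² + d² − 12d²z − 12d²z² − 24bdz² + 12bd²z + 12bd²z² + 3bd² − 12bdz). -/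
theorem f_second_taylor_coefficient (z : ℝ) (hz : 0 < z) (α : ℝ)
    (hα : α = Real.log ((z + 1) / z)) (d : ℝ) (hd : d = z * α) (b : ℝ) (f : ℝ → ℝ)
    (hf0 : f 0 = 1)
    (hf : ∀ t : ℝ, 0 < t →
      f t = (((1 - Real.exp (-t)) / t) * ((Real.exp t - Real.exp (-α)) / (t + α)) *
        (α / (1 - Real.exp (-α)))) ^ b) :
    (∀ᶠ t in nhdsWithin (0:ℝ) (Set.Ici 0), DifferentiableWithinAt ℝ f (Set.Ici 0) t) ∧
    DifferentiableWithinAt ℝ (derivWithin f (Set.Ici 0)) (Set.Ici 0) 0 ∧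
    derivWithin (derivWithin f (Set.Ici 0)) (Set.Ici 0) 0 / 2 =
      (b / (24 * d^2)) *
        (12 * z^2 + 12 * b * z^2 + d^2 - 12 * d^2 * z - 12 * d^2 * z^2 - 24 * b * d * z^2
          + 12 * b * d^2 * z + 12 * b * d^2 * z^2 + 3 * b * d^2 - 12 * b * d * z) := by
  have hexp : Real.exp α = (z + 1) / z := by rw [hα, Real.exp_log (by positivity)]
  have hα_pos : 0 < α := by
    rw [hα]; exact Real.log_pos ((one_lt_div hz).2 (lt_add_one z))
  set h : ℝ → ℝ := fun t => logExpSlope (-t) + logExpSlope (t + α) - logExpSlope α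
  have hfg : EqOn f (fun t => Real.exp (b * h t)) (Ici 0) := by
    intro t ht
    rcases (mem_Ici.1 ht).eq_or_lt with rfl | ht
    · simp [hf0, h, logExpSlope_zero]
    · rw [hf t ht, ← expSlope_neg_mul_expSlope_add_div_expSlope ht.ne' (by positivity)
        hα_pos.ne', expSlope_neg_mul_expSlope_add_div_expSlope_rpow]
  obtain ⟨hdiff, hdiff', hderiv⟩ := derivWithin_derivWithin_eq_of_eqOn hfg (uniqueDiffOn_Ici 0)
    self_mem_Ici (by fun_prop)
  refine ⟨hdiff, hdiff', ?_⟩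
  rw [hderiv, deriv_deriv_exp_const_mul (by fun_prop), deriv_deriv_comp_neg_add_comp_add_const
    contDiff_logExpSlope, deriv_comp_neg_add_comp_add_const differentiable_logExpSlope]
  simp only [h, neg_zero, zero_add, logExpSlope_zero, sub_self, mul_zero, Real.exp_zero, one_mul,
    deriv_logExpSlope_zero, deriv_deriv_logExpSlope_zero, deriv_logExpSlope_of_ne_zero hα_pos.ne',
    deriv_deriv_logExpSlope_of_ne_zero hα_pos.ne', hexp, hd]
  field_simp
  ring
end
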